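/- arXiv:math/0211432 — 4 statements merged into one kernel-verified Lean document; each statement's English description precedes it below -/
import Mathlib

section
/- Let 𝔖 be a finite subset of ℤ² that is symmetric with respect to the x-axis (i.e., (i,j) ∈ 𝔖 implies (i,−j) ∈ 𝔖) and has small height variation (i.e., (i,j) ∈ 𝔖 implies |j| ≤ 1). Let (i₀,j₀) ∈ ℕ². For every n ≥ 0, the number of walks of length n starting at (i₀,j₀), with steps in 𝔖, staying in the quadrant x ≥ 0, y ≥ 0, visiting at least one point of ordinate 0, and ending at a point of even ordinate, equals the number of walks of length n starting at (i₀,j₀), with steps in 𝔖, staying in the half-plane x ≥ 0, and ending at a point of ordinate 0. -/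
namespace QHP

variable {n : ℕ}

def rmin (y : Fin (n+1) → ℤ) (t : Fin (n+1)) : ℤ :=
  (Finset.Iic t).inf' Finset.nonempty_Iic y

def mfun (y : Fin (n+1) → ℤ) (t : Fin (n+1)) : ℤ := max 0 (-(rmin y t))

def fmin (y : Fin (n+1) → ℤ) (t : Fin (n+1)) : ℤ :=
  (Finset.Ici t).inf' Finset.nonempty_Ici y

def mufun (r : ℤ) (y : Fin (n+1) → ℤ) (t : Fin (n+1)) : ℤ := min r (fmin y t)

lemma rmin_le {y : Fin (n+1) → ℤ} {s t : Fin (n+1)} (h : s ≤ t) : rmin y t ≤ y s :=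
  Finset.inf'_le _ (Finset.mem_Iic.2 h)

lemma le_rmin {y : Fin (n+1) → ℤ} {t : Fin (n+1)} {c : ℤ}
    (h : ∀ s, s ≤ t → c ≤ y s) : c ≤ rmin y t :=
  Finset.le_inf' _ _ (fun s hs => h s (Finset.mem_Iic.1 hs))

lemma fmin_le {y : Fin (n+1) → ℤ} {s t : Fin (n+1)} (h : t ≤ s) : fmin y t ≤ y s :=
  Finset.inf'_le _ (Finset.mem_Ici.2 h)

lemma le_fmin {y : Fin (n+1) → ℤ} {t : Fin (n+1)} {c : ℤ}
    (h : ∀ s, t ≤ s → c ≤ y s) : c ≤ fmin y t :=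
  Finset.le_inf' _ _ (fun s hs => h s (Finset.mem_Ici.1 hs))

lemma rmin_zero (y : Fin (n+1) → ℤ) : rmin y 0 = y 0 := by
  apply le_antisymm (rmin_le le_rfl)
  apply le_rmin
  intro s hs
  have : s = 0 := le_antisymm hs (Fin.zero_le s)
  rw [this]

lemma fmin_last (y : Fin (n+1) → ℤ) : fmin y (Fin.last n) = y (Fin.last n) := by
  apply le_antisymm (fmin_le le_rfl)
  apply le_fmin
  intro s hs
  have : s = Fin.last n := le_antisymm (Fin.le_last s) hs
  rw [this]

lemma rmin_anti {y : Fin (n+1) → ℤ} {s t : Fin (n+1)} (h : s ≤ t) : rmin y t ≤ rmin y s :=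
  Finset.inf'_mono _ (Finset.Iic_subset_Iic.2 h) _

lemma fmin_mono {y : Fin (n+1) → ℤ} {s t : Fin (n+1)} (h : s ≤ t) : fmin y s ≤ fmin y t :=
  Finset.inf'_mono _ (Finset.Ici_subset_Ici.2 h) _

lemma castSucc_le_succ (k : Fin n) : (k.castSucc : Fin (n+1)) ≤ k.succ := by
  rw [Fin.le_def]; simp

lemma rmin_succ (y : Fin (n+1) → ℤ) (k : Fin n) :
    rmin y k.succ = min (rmin y k.castSucc) (y k.succ) := by
  apply le_antisymm
  · exact le_min (rmin_anti (castSucc_le_succ k)) (rmin_le le_rfl)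
  · apply le_rmin
    intro s hsle
    rcases le_or_gt s k.castSucc with h | h
    · exact le_trans (min_le_left _ _) (rmin_le h)
    · have : s = k.succ := by
        rw [Fin.le_def] at hsle; rw [Fin.lt_def] at h
        apply Fin.ext; simp at hsle h ⊢; omega
      rw [this]; exact min_le_right _ _

lemma fmin_castSucc (y : Fin (n+1) → ℤ) (k : Fin n) :
    fmin y k.castSucc = min (y k.castSucc) (fmin y k.succ) := by
  apply le_antisymm
  · exact le_min (fmin_le le_rfl) (fmin_mono (castSucc_le_succ k))
  · apply le_fmin
    intro s hsle
    rcases le_or_gt k.succ s with h | h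
    · exact le_trans (min_le_right _ _) (fmin_le h)
    · have : s = k.castSucc := by
        rw [Fin.le_def] at hsle; rw [Fin.lt_def] at h
        apply Fin.ext; simp at hsle h ⊢; omega
      rw [this]; exact min_le_left _ _

lemma mfun_nonneg (y : Fin (n+1) → ℤ) (t : Fin (n+1)) : 0 ≤ mfun y t := le_max_left _ _

lemma mfun_mono {y : Fin (n+1) → ℤ} {s t : Fin (n+1)} (h : s ≤ t) : mfun y s ≤ mfun y t :=
  max_le_max le_rfl (neg_le_neg (rmin_anti h))

lemma mfun_zero {y : Fin (n+1) → ℤ} (h : 0 ≤ y 0) : mfun y 0 = 0 := by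
  unfold mfun; rw [rmin_zero]; omega

lemma neg_mfun_le {y : Fin (n+1) → ℤ} {s t : Fin (n+1)} (h : s ≤ t) : -(mfun y t) ≤ y s := by
  have h1 := rmin_le (y := y) h
  unfold mfun; omega

lemma mufun_mono {r : ℤ} {y : Fin (n+1) → ℤ} {s t : Fin (n+1)} (h : s ≤ t) :
    mufun r y s ≤ mufun r y t := min_le_min le_rfl (fmin_mono h)

lemma mufun_le {r : ℤ} {y : Fin (n+1) → ℤ} {s t : Fin (n+1)} (h : t ≤ s) :
    mufun r y t ≤ y s := le_trans (min_le_right _ _) (fmin_le h)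

lemma mufun_zero {r : ℤ} {y : Fin (n+1) → ℤ} (hpos : ∀ s, 0 ≤ y s)
    (htouch : ∃ s, y s = 0) (hr0 : 0 ≤ r) : mufun r y 0 = 0 := by
  obtain ⟨s, hs⟩ := htouch
  have h1 : fmin y 0 ≤ y s := fmin_le (Fin.zero_le s)
  have h2 : (0:ℤ) ≤ fmin y 0 := le_fmin (fun s _ => hpos s)
  unfold mufun; omega

lemma mfun_step (y : Fin (n+1) → ℤ) (k : Fin n) (hstep : |y k.succ - y k.castSucc| ≤ 1) :
    mfun y k.succ = mfun y k.castSucc ∨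
    (mfun y k.succ = mfun y k.castSucc + 1 ∧ y k.succ = -(mfun y k.succ) ∧
      y k.castSucc = -(mfun y k.castSucc)) := by
  rw [abs_le] at hstep
  have h1 := rmin_succ y k
  have h2 : rmin y k.castSucc ≤ y k.castSucc := rmin_le le_rfl
  unfold mfun
  omega

lemma mufun_step (r : ℤ) (y : Fin (n+1) → ℤ) (k : Fin n)
    (hstep : |y k.succ - y k.castSucc| ≤ 1) :
    mufun r y k.succ = mufun r y k.castSucc ∨
    (mufun r y k.succ = mufun r y k.castSucc + 1 ∧ y k.succ = mufun r y k.succ ∧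
      y k.castSucc = mufun r y k.castSucc) := by
  rw [abs_le] at hstep
  have h1 := fmin_castSucc y k
  have h2 : fmin y k.succ ≤ y k.succ := fmin_le le_rfl
  unfold mufun
  omega

/-- discrete IVT: first up-crossing of level `j` in `[0, t]` -/
lemma exists_cross {f : Fin (n+1) → ℤ} {t : Fin (n+1)} {j : ℤ}
    (h0 : f 0 < j) (ht : j ≤ f t) :
    ∃ k : Fin n, k.succ ≤ t ∧ f k.castSucc < j ∧ j ≤ f k.succ := by
  classical
  have hne : ((Finset.Iic t).filter (fun u => j ≤ f u)).Nonempty := ⟨t, by simp [ht]⟩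
  have hsmem := Finset.min'_mem _ hne
  rw [Finset.mem_filter, Finset.mem_Iic] at hsmem
  obtain ⟨hst, hfs⟩ := hsmem
  have hs0 : ((Finset.Iic t).filter (fun u => j ≤ f u)).min' hne ≠ 0 := by
    intro h; rw [h] at hfs; omega
  set s := ((Finset.Iic t).filter (fun u => j ≤ f u)).min' hne with hs
  have hv : (0:ℕ) < s.val := by
    rcases Nat.eq_zero_or_pos s.val with h | h
    · exact absurd (Fin.ext (h.trans (by simp))) hs0
    · exact h
  refine ⟨s.pred hs0, ?_, ?_, ?_⟩
  · rw [Fin.succ_pred]; exact hst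
  · by_contra hcon
    push_neg at hcon
    have hmem : (s.pred hs0).castSucc ∈ (Finset.Iic t).filter (fun u => j ≤ f u) := by
      refine Finset.mem_filter.2 ⟨Finset.mem_Iic.2 ?_, hcon⟩
      rw [Fin.le_def] at hst ⊢
      simp [Fin.coe_pred] at hst ⊢; omega
    have hmin := Finset.min'_le _ _ hmem
    rw [← hs, Fin.le_def] at hmin
    simp [Fin.coe_pred] at hmin
    omega
  · rw [Fin.succ_pred]; exact hfs

/-- discrete IVT: first up-crossing of level `j` in `[t, last]` -/
lemma exists_cross_ge {f : Fin (n+1) → ℤ} {t : Fin (n+1)} {j : ℤ}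
    (h0 : f t < j) (ht : j ≤ f (Fin.last n)) :
    ∃ k : Fin n, t ≤ k.castSucc ∧ f k.castSucc < j ∧ j ≤ f k.succ := by
  classical
  have hne : ((Finset.Ici t).filter (fun u => j ≤ f u)).Nonempty :=
    ⟨Fin.last n, by simp [ht, Fin.le_last]⟩
  have hsmem := Finset.min'_mem _ hne
  rw [Finset.mem_filter, Finset.mem_Ici] at hsmem
  obtain ⟨hst, hfs⟩ := hsmem
  set s := ((Finset.Ici t).filter (fun u => j ≤ f u)).min' hne with hs
  have hsne : s ≠ t := by intro h; rw [h] at hfs; omega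
  have htlt : t < s := lt_of_le_of_ne hst (Ne.symm hsne)
  have hs0 : s ≠ 0 := by
    intro h; rw [h] at htlt; exact absurd (Fin.zero_le t) (not_le.2 htlt)
  have hv : (0:ℕ) < s.val := by
    rcases Nat.eq_zero_or_pos s.val with h | h
    · exact absurd (Fin.ext (h.trans (by simp))) hs0
    · exact h
  have htc : t ≤ (s.pred hs0).castSucc := by
    rw [Fin.lt_def] at htlt; rw [Fin.le_def]
    simp [Fin.coe_pred] at htlt ⊢; omega
  refine ⟨s.pred hs0, htc, ?_, ?_⟩
  · by_contra hcon
    push_neg at hcon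
    have hmem : (s.pred hs0).castSucc ∈ (Finset.Ici t).filter (fun u => j ≤ f u) :=
      Finset.mem_filter.2 ⟨Finset.mem_Ici.2 htc, hcon⟩
    have hmin := Finset.min'_le _ _ hmem
    rw [← hs, Fin.le_def] at hmin
    simp [Fin.coe_pred] at hmin
    omega
  · rw [Fin.succ_pred]; exact hfs


/-- Roundtrip 1: the future-min functional of the unfolded walk recovers `mfun`. -/
lemma mu_of_m (y : Fin (n+1) → ℤ)
    (hstep : ∀ k : Fin n, |y k.succ - y k.castSucc| ≤ 1) (t : Fin (n+1)) :
    mufun (mfun y (Fin.last n)) (fun s => y s + 2 * mfun y s) t = mfun y t := by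
  have hge : mfun y t ≤ mufun (mfun y (Fin.last n)) (fun s => y s + 2 * mfun y s) t := by
    refine le_min (mfun_mono (Fin.le_last t)) (le_fmin ?_)
    intro s hs
    have h1 : -(mfun y s) ≤ y s := neg_mfun_le le_rfl
    have h2 : mfun y t ≤ mfun y s := mfun_mono hs
    omega
  have hle : mufun (mfun y (Fin.last n)) (fun s => y s + 2 * mfun y s) t ≤ mfun y t := by
    by_cases hc : mfun y (Fin.last n) ≤ mfun y t
    · exact le_trans (min_le_left _ _) hc
    · push_neg at hc
      obtain ⟨k, htk, h1, h2⟩ :=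
        exists_cross_ge (f := mfun y) (t := t) (j := mfun y t + 1) (by omega) (by omega)
      have hmono := mfun_mono (y := y) htk
      rcases mfun_step y k (hstep k) with h | ⟨ha, hb, hcc⟩
      · omega
      · have hP : y k.castSucc + 2 * mfun y k.castSucc = mfun y t := by omega
        calc mufun (mfun y (Fin.last n)) (fun s => y s + 2 * mfun y s) t
            ≤ fmin (fun s => y s + 2 * mfun y s) t := min_le_right _ _
          _ ≤ y k.castSucc + 2 * mfun y k.castSucc := fmin_le htk
          _ = mfun y t := hP
  omega

/-- Roundtrip 2: the past-min functional of the folded walk recovers `mufun`. -/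
lemma m_of_mu (y : Fin (n+1) → ℤ) (r : ℤ) (hpos : ∀ s, 0 ≤ y s)
    (htouch : ∃ s, y s = 0) (hr : y (Fin.last n) = 2 * r)
    (hstep : ∀ k : Fin n, |y k.succ - y k.castSucc| ≤ 1) (t : Fin (n+1)) :
    mfun (fun s => y s - 2 * mufun r y s) t = mufun r y t := by
  have hr0 : (0:ℤ) ≤ r := by have := hpos (Fin.last n); omega
  have hmu0 : mufun r y 0 = 0 := mufun_zero hpos htouch hr0
  have hmut : 0 ≤ mufun r y t := by
    have h0le : mufun r y 0 ≤ mufun r y t := mufun_mono (Fin.zero_le t)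
    omega
  have hle : mfun (fun s => y s - 2 * mufun r y s) t ≤ mufun r y t := by
    have h1 : -(mufun r y t) ≤ rmin (fun s => y s - 2 * mufun r y s) t := by
      apply le_rmin
      intro s hs
      have h2 : mufun r y s ≤ y s := mufun_le le_rfl
      have h3 : mufun r y s ≤ mufun r y t := mufun_mono hs
      omega
    unfold mfun
    omega
  have hge : mufun r y t ≤ mfun (fun s => y s - 2 * mufun r y s) t := by
    by_cases hc : mufun r y t ≤ 0
    · exact le_trans hc (mfun_nonneg _ _)
    · push_neg at hc
      obtain ⟨k, hkt, h1, h2⟩ :=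
        exists_cross (f := mufun r y) (j := mufun r y t) (by omega) le_rfl
      rcases mufun_step r y k (hstep k) with h | ⟨ha, hb, hcc⟩
      · omega
      · have hBk : y k.succ - 2 * mufun r y k.succ = -(mufun r y t) := by omega
        have h4 : rmin (fun s => y s - 2 * mufun r y s) t ≤
            y k.succ - 2 * mufun r y k.succ := rmin_le hkt
        unfold mfun
        omega
  omega


def phiW (w : Fin (n+1) → ℤ × ℤ) (t : Fin (n+1)) : ℤ × ℤ :=
  ((w t).1, (w t).2 + 2 * mfun (fun s => (w s).2) t)

def psiW (w : Fin (n+1) → ℤ × ℤ) (t : Fin (n+1)) : ℤ × ℤ :=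
  ((w t).1, (w t).2 - 2 * mufun ((w (Fin.last n)).2 / 2) (fun s => (w s).2) t)

lemma height_step {S : Finset (ℤ × ℤ)} (hheight : ∀ i j : ℤ, (i, j) ∈ S → |j| ≤ 1)
    {w : Fin (n+1) → ℤ × ℤ} (h2 : ∀ k : Fin n, w k.succ - w k.castSucc ∈ S) (k : Fin n) :
    |(w k.succ).2 - (w k.castSucc).2| ≤ 1 := by
  have h := hheight (w k.succ - w k.castSucc).1 (w k.succ - w k.castSucc).2
    (by rw [Prod.mk.eta]; exact h2 k)
  simpa using h

lemma phi_steps {S : Finset (ℤ × ℤ)} (hsym : ∀ i j : ℤ, (i, j) ∈ S → (i, -j) ∈ S)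
    (hheight : ∀ i j : ℤ, (i, j) ∈ S → |j| ≤ 1)
    {w : Fin (n+1) → ℤ × ℤ} (h2 : ∀ k : Fin n, w k.succ - w k.castSucc ∈ S) (k : Fin n) :
    phiW w k.succ - phiW w k.castSucc ∈ S := by
  rcases mfun_step (fun s => (w s).2) k (height_step hheight h2 k) with h | ⟨ha, hb, hcc⟩
  · have heq : phiW w k.succ - phiW w k.castSucc = w k.succ - w k.castSucc := by
      unfold phiW
      refine Prod.ext_iff.2 ⟨by simp, by simp; omega⟩
    rw [heq]; exact h2 k
  · have heq : phiW w k.succ - phiW w k.castSucc =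
        ((w k.succ - w k.castSucc).1, -((w k.succ - w k.castSucc).2)) := by
      unfold phiW
      refine Prod.ext_iff.2 ⟨by simp, by simp; omega⟩
    rw [heq]
    exact hsym _ _ (by rw [Prod.mk.eta]; exact h2 k)

lemma psi_steps {S : Finset (ℤ × ℤ)} (hsym : ∀ i j : ℤ, (i, j) ∈ S → (i, -j) ∈ S)
    (hheight : ∀ i j : ℤ, (i, j) ∈ S → |j| ≤ 1)
    {w : Fin (n+1) → ℤ × ℤ} (h2 : ∀ k : Fin n, w k.succ - w k.castSucc ∈ S) (k : Fin n) :
    psiW w k.succ - psiW w k.castSucc ∈ S := by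
  rcases mufun_step ((w (Fin.last n)).2 / 2) (fun s => (w s).2) k
      (height_step hheight h2 k) with h | ⟨ha, hb, hcc⟩
  · have heq : psiW w k.succ - psiW w k.castSucc = w k.succ - w k.castSucc := by
      unfold psiW
      refine Prod.ext_iff.2 ⟨by simp, by simp; omega⟩
    rw [heq]; exact h2 k
  · have heq : psiW w k.succ - psiW w k.castSucc =
        ((w k.succ - w k.castSucc).1, -((w k.succ - w k.castSucc).2)) := by
      unfold psiW
      refine Prod.ext_iff.2 ⟨by simp, by simp; omega⟩
    rw [heq]
    exact hsym _ _ (by rw [Prod.mk.eta]; exact h2 k)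

lemma phi_touch {w : Fin (n+1) → ℤ × ℤ} (h0 : 0 ≤ (w 0).2)
    (hlast : (w (Fin.last n)).2 = 0)
    (hstep : ∀ k : Fin n, |(w k.succ).2 - (w k.castSucc).2| ≤ 1) :
    ∃ t, (phiW w t).2 = 0 := by
  by_cases hc : mfun (fun s => (w s).2) (Fin.last n) ≤ 0
  · refine ⟨Fin.last n, ?_⟩
    have := mfun_nonneg (fun s => (w s).2) (Fin.last n)
    unfold phiW
    omega
  · push_neg at hc
    obtain ⟨k, _, h1, h2⟩ := exists_cross (f := mfun (fun s => (w s).2)) (t := Fin.last n)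
      (j := 1) (by rw [mfun_zero h0]; omega) (by omega)
    rcases mfun_step (fun s => (w s).2) k (hstep k) with h | ⟨ha, hb, hcc⟩
    · omega
    · refine ⟨k.castSucc, ?_⟩
      unfold phiW
      omega

end QHP

open QHP

/-- For a step set symmetric with respect to the `x`-axis and with small height variation,
the number of `n`-step quadrant walks from `(i₀, j₀)` that visit the `x`-axis and end at an
even ordinate equals the number of `n`-step half-plane walks from `(i₀, j₀)` ending on the
`x`-axis. -/
theorem quadrant_vs_halfPlane_count (S : Finset (ℤ × ℤ))
    (hsym : ∀ i j : ℤ, (i, j) ∈ S → (i, -j) ∈ S)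
    (hheight : ∀ i j : ℤ, (i, j) ∈ S → |j| ≤ 1)
    (i₀ j₀ : ℕ) (n : ℕ) :
    Nat.card {w : Fin (n + 1) → ℤ × ℤ //
      w 0 = ((i₀ : ℤ), (j₀ : ℤ)) ∧
      (∀ k : Fin n, w k.succ - w k.castSucc ∈ S) ∧
      (∀ k, 0 ≤ (w k).1 ∧ 0 ≤ (w k).2) ∧
      (∃ k, (w k).2 = 0) ∧
      2 ∣ (w (Fin.last n)).2} =
    Nat.card {w : Fin (n + 1) → ℤ × ℤ //
      w 0 = ((i₀ : ℤ), (j₀ : ℤ)) ∧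
      (∀ k : Fin n, w k.succ - w k.castSucc ∈ S) ∧
      (∀ k, 0 ≤ (w k).1) ∧
      (w (Fin.last n)).2 = 0} := by
  apply Nat.card_congr
  refine
    { toFun := fun a => ⟨psiW a.1, ?_⟩
      invFun := fun b => ⟨phiW b.1, ?_⟩
      left_inv := ?_
      right_inv := ?_ }
  · -- psiW lands in the half-plane set
    obtain ⟨h1, h2, h3, h4, h5⟩ := a.2
    set w := a.1 with hw
    have hpos : ∀ s, 0 ≤ (w s).2 := fun s => (h3 s).2
    obtain ⟨c, hc⟩ := h5
    have hr : (w (Fin.last n)).2 = 2 * ((w (Fin.last n)).2 / 2) := by omega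
    have hr0 : 0 ≤ (w (Fin.last n)).2 / 2 := by have := hpos (Fin.last n); omega
    have hmu0 : mufun ((w (Fin.last n)).2 / 2) (fun s => (w s).2) 0 = 0 :=
      mufun_zero hpos h4 hr0
    refine ⟨?_, fun k => psi_steps hsym hheight h2 k, fun k => (h3 k).1, ?_⟩
    · unfold psiW
      rw [hmu0, h1]
      simp
    · unfold psiW
      have hfl : fmin (fun s => (w s).2) (Fin.last n) = (w (Fin.last n)).2 :=
        fmin_last _
      unfold mufun
      rw [hfl]
      omega
  · -- phiW lands in the quadrant set
    obtain ⟨h1, h2, h3, h4⟩ := b.2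
    set w := b.1 with hw
    have h0 : 0 ≤ (w 0).2 := by rw [h1]; exact Int.natCast_nonneg j₀
    refine ⟨?_, fun k => phi_steps hsym hheight h2 k, ?_, ?_, ?_⟩
    · unfold phiW
      rw [mfun_zero h0, h1]
      simp
    · intro k
      refine ⟨h3 k, ?_⟩
      have ha : -(mfun (fun s => (w s).2) k) ≤ (w k).2 :=
        neg_mfun_le (y := fun s => (w s).2) (le_refl k)
      have hb := mfun_nonneg (fun s => (w s).2) k
      unfold phiW
      omega
    · exact phi_touch h0 h4 (fun k => height_step hheight h2 k)
    · unfold phiW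
      exact ⟨mfun (fun s => (w s).2) (Fin.last n), by omega⟩
  · -- left inverse : phiW (psiW w) = w on the quadrant side
    rintro ⟨w, h1, h2, h3, h4, h5⟩
    apply Subtype.ext
    funext t
    have hpos : ∀ s, 0 ≤ (w s).2 := fun s => (h3 s).2
    obtain ⟨c, hc⟩ := h5
    have hr : (w (Fin.last n)).2 = 2 * ((w (Fin.last n)).2 / 2) := by omega
    have hkey : mfun (fun s => (psiW w s).2) t =
        mufun ((w (Fin.last n)).2 / 2) (fun s => (w s).2) t := by
      have hfe : (fun s => (psiW w s).2) =
          (fun s => (w s).2 - 2 * mufun ((w (Fin.last n)).2 / 2) (fun s => (w s).2) s) := rfl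
      rw [hfe]
      exact m_of_mu (fun s => (w s).2) ((w (Fin.last n)).2 / 2) hpos h4 hr
        (fun k => height_step hheight h2 k) t
    show phiW (psiW w) t = w t
    unfold phiW
    rw [hkey]
    unfold psiW
    refine Prod.ext_iff.2 ⟨rfl, by simp⟩
  · -- right inverse : psiW (phiW w) = w on the half-plane side
    rintro ⟨w, h1, h2, h3, h4⟩
    apply Subtype.ext
    funext t
    have hr' : (phiW w (Fin.last n)).2 / 2 = mfun (fun s => (w s).2) (Fin.last n) := by
      show ((w (Fin.last n)).2 + 2 * mfun (fun s => (w s).2) (Fin.last n)) / 2 = _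
      rw [h4]
      omega
    have hkey : mufun ((phiW w (Fin.last n)).2 / 2) (fun s => (phiW w s).2) t =
        mfun (fun s => (w s).2) t := by
      have hfe : (fun s => (phiW w s).2) =
          (fun s => (w s).2 + 2 * mfun (fun s => (w s).2) s) := rfl
      rw [hfe, hr']
      exact mu_of_m (fun s => (w s).2) (fun k => height_step hheight h2 k) t
    show psiW (phiW w) t = w t
    unfold psiW
    rw [hkey]
    unfold phiW
    refine Prod.ext_iff.2 ⟨rfl, by simp⟩
end

section
/- For every n ≥ 0, the number of walks of length n on the square lattice (steps (1,0), (−1,0), (0,1), (0,−1)) that start at (0,0) and stay in the quadrant x ≥ 0, y ≥ 0 equals C(n, ⌊n/2⌋) · C(n+1, ⌈n/2⌉), and also equals ∑_{m=0}^{n} C(n,m) · C(m, ⌊m/2⌋) · C(n−m, ⌊(n−m)/2⌋), where C(a,b) denotes the binomial coefficient. -/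
/-!
A quadrant walk is a shuffle of its horizontal and its vertical projection, each a walk on `ℕ`
with steps `±1`. Recording which of the `n` steps are horizontal gives
`∑ m, C(n, m) b(m) b(n - m)`, where `b(m)` counts the walks of length `m` on `ℕ`. This is proved
for endpoint counts by induction on `n`: removing the last step turns it into Pascal's rule.
By the ballot formula, the number of walks on `ℕ` of length `m` ending at `2j - m` is
`C(m, j) - C(m, j + 1)`; these telescope to `b(m) = C(m, ⌊m/2⌋)`.

Each summand is the multinomial coefficient `n! / (⌊i/2⌋! ⌈i/2⌉! ⌊j/2⌋! ⌈j/2⌉!)` with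
`i + j = n`, which can be regrouped as `C(n, ⌊n/2⌋) C(⌊n/2⌋, ⌊i/2⌋) C(⌈n/2⌉, ⌈i/2⌉)`. Taking
`i` two at a time turns the sum into a Vandermonde convolution equal to
`C(n, ⌊n/2⌋) C(n + 1, ⌈n/2⌉)`.
-/

/-- The number of `n`-step walks on the square lattice (steps N, E, S, W) starting at the
origin and confined to the quadrant `x ≥ 0, y ≥ 0`. -/
noncomputable def squareQuadrantCount (n : ℕ) : ℕ :=
  Nat.card {w : Fin (n + 1) → ℤ × ℤ //
    w 0 = (0, 0) ∧
    (∀ k : Fin n, w k.succ - w k.castSucc ∈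
      ({(1, 0), (-1, 0), (0, 1), (0, -1)} : Set (ℤ × ℤ))) ∧
    ∀ k, 0 ≤ (w k).1 ∧ 0 ≤ (w k).2}

open Finset

namespace LatticeWalk

variable {G : Type*} [AddCommGroup G]

def walks (S : Finset G) (R : Set G) (a : G) (n : ℕ) : Set (Fin (n + 1) → G) :=
  {w | w 0 = a ∧ (∀ k : Fin n, w k.succ - w k.castSucc ∈ S) ∧ ∀ k, w k ∈ R}

def walksTo (S : Finset G) (R : Set G) (a : G) (n : ℕ) (p : G) : Set (Fin (n + 1) → G) :=
  {w | w ∈ walks S R a n ∧ w (Fin.last n) = p}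

noncomputable def walkCount (S : Finset G) (R : Set G) (a : G) (n : ℕ) (p : G) : ℕ :=
  Nat.card (walksTo S R a n p)

variable {S : Finset G} {R : Set G} {a : G} {n : ℕ}

theorem snoc_mem_walks_iff {v : Fin (n + 1) → G} {q : G} :
    Fin.snoc v q ∈ walks S R a (n + 1) ↔
      v ∈ walks S R a n ∧ q - v (Fin.last n) ∈ S ∧ q ∈ R := by
  simp only [walks, Set.mem_ofPred_eq, Fin.forall_fin_succ' (n := n),
    Fin.forall_fin_succ' (n := n + 1)]
  simp only [Fin.succ_castSucc, Fin.snoc_castSucc, Fin.succ_last, Fin.snoc_last,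
    Fin.snoc_apply_zero]
  tauto

theorem mem_of_mem_walksTo {p : G} {w : Fin (n + 1) → G} (hw : w ∈ walksTo S R a n p) :
    p ∈ R :=
  hw.2 ▸ hw.1.2.2 _

def walksToSuccEquiv {p : G} (hp : p ∈ R) :
    walksTo S R a (n + 1) p ≃ Σ s : S, walksTo S R a n (p - s) where
  toFun w :=
    have hw : Fin.snoc (Fin.init w.1) p ∈ walks S R a (n + 1) := by
      have h := w.2.1
      rwa [← Fin.snoc_init_self w.1, w.2.2] at h
    ⟨⟨p - Fin.init w.1 (Fin.last n), (snoc_mem_walks_iff.1 hw).2.1⟩,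
      ⟨Fin.init w.1, (snoc_mem_walks_iff.1 hw).1, by simp⟩⟩
  invFun v := ⟨Fin.snoc v.2.1 p, snoc_mem_walks_iff.2 ⟨v.2.2.1, by simp [v.2.2.2], hp⟩, by simp⟩
  left_inv w := Subtype.ext <| by
    conv_rhs => rw [← Fin.snoc_init_self w.1, w.2.2]
  right_inv v := Sigma.subtype_ext (Subtype.ext <| by simp [v.2.2.2]) (by simp)

theorem isEmpty_walksTo {p : G} (hp : p ∉ R) : IsEmpty (walksTo S R a n p) :=
  ⟨fun w => hp (mem_of_mem_walksTo w.2)⟩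

instance (p : G) : Subsingleton (walksTo S R a 0 p) :=
  ⟨fun v w => Subtype.ext <| funext fun k => by rw [Fin.fin_one_eq_zero k, v.2.1.1, w.2.1.1]⟩

instance finite_walksTo (p : G) : Finite (walksTo S R a n p) := by
  induction n generalizing p with
  | zero => infer_instance
  | succ n ih =>
    by_cases hp : p ∈ R
    · exact Finite.of_equiv _ (walksToSuccEquiv hp).symm
    · have := isEmpty_walksTo (S := S) (a := a) (n := n + 1) hp
      infer_instance

open Classical in
theorem walkCount_zero (p : G) : walkCount S R a 0 p = if a ∈ R ∧ p = a then 1 else 0 := by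
  split_ifs with h
  · obtain ⟨ha, rfl⟩ := h
    have : Nonempty (walksTo S R p 0 p) := ⟨fun _ => p, ⟨rfl, Fin.elim0, fun _ => ha⟩, rfl⟩
    exact Nat.card_unique
  · have : IsEmpty (walksTo S R a 0 p) :=
      ⟨fun w => h ⟨w.2.1.1 ▸ w.2.1.2.2 0, w.2.2.symm.trans w.2.1.1⟩⟩
    exact Nat.card_of_isEmpty

theorem walkCount_succ {p : G} (hp : p ∈ R) :
    walkCount S R a (n + 1) p = ∑ s ∈ S, walkCount S R a n (p - s) := by
  rw [walkCount, Nat.card_congr (walksToSuccEquiv hp), Nat.card_sigma]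
  exact sum_coe_sort S fun s => walkCount S R a n (p - s)

theorem walkCount_of_notMem {p : G} (hp : p ∉ R) : walkCount S R a n p = 0 := by
  have := isEmpty_walksTo (S := S) (a := a) (n := n) hp
  exact Nat.card_of_isEmpty

theorem walkCount_eq_zero_of_notMem (T : ℕ → Set G) (h₀ : a ∈ T 0)
    (hT : ∀ n, ∀ q ∈ T n, ∀ s ∈ S, q + s ∈ T (n + 1)) {p : G} (hp : p ∉ T n) :
    walkCount S R a n p = 0 := by
  induction n generalizing p with
  | zero => rw [walkCount_zero, if_neg fun (h : a ∈ R ∧ p = a) => hp (h.2 ▸ h₀)]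
  | succ n ih =>
    by_cases hpR : p ∈ R
    · rw [walkCount_succ hpR]
      exact sum_eq_zero fun s hs =>
        ih fun (h : p - s ∈ T n) => hp (sub_add_cancel p s ▸ hT n _ h s hs)
    · exact walkCount_of_notMem hpR

open scoped Pointwise in
theorem walkCount_eq_zero_of_notMem_add_nsmul [DecidableEq G] {p : G}
    (hp : p ∉ {a} + n • S) : walkCount S R a n p = 0 :=
  walkCount_eq_zero_of_notMem (fun n => ↑({a} + n • S)) (by simp)
    (fun n q hq s hs => by
      rw [mem_coe, succ_nsmul, ← add_assoc]
      exact add_mem_add hq hs) hp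

theorem card_walks_eq_sum_walkCount (T : Finset G) (hT : ∀ p ∉ T, walkCount S R a n p = 0) :
    Nat.card (walks S R a n) = ∑ p ∈ T, walkCount S R a n p := by
  have hmem (w) (hw : w ∈ walks S R a n) : w (Fin.last n) ∈ T := by
    by_contra h
    have : Nonempty (walksTo S R a n (w (Fin.last n))) := ⟨⟨w, hw, rfl⟩⟩
    exact Nat.card_pos.ne' (hT _ h)
  let e : walks S R a n ≃ Σ p : T, walksTo S R a n p :=
    { toFun w := ⟨⟨_, hmem w.1 w.2⟩, ⟨w.1, w.2, rfl⟩⟩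
      invFun v := ⟨v.2.1, v.2.2.1⟩
      left_inv _ := rfl
      right_inv v := Sigma.subtype_ext (Subtype.ext v.2.2.2) rfl }
  rw [Nat.card_congr e, Nat.card_sigma]
  exact sum_coe_sort T (walkCount S R a n)

section Product

variable {G₁ G₂ : Type*} [AddCommGroup G₁] [AddCommGroup G₂] [DecidableEq G₁] [DecidableEq G₂]
  {S₁ : Finset G₁} {S₂ : Finset G₂} {R₁ : Set G₁} {R₂ : Set G₂} {a₁ : G₁} {a₂ : G₂}

def prodSteps (S₁ : Finset G₁) (S₂ : Finset G₂) : Finset (G₁ × G₂) := S₁ ×ˢ {0} ∪ {0} ×ˢ S₂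

theorem sum_prodSteps {M : Type*} [AddCommMonoid M] (h₁ : (0 : G₁) ∉ S₁) (f : G₁ × G₂ → M) :
    ∑ s ∈ prodSteps S₁ S₂, f s = ∑ s ∈ S₁, f (s, 0) + ∑ s ∈ S₂, f (0, s) := by
  have hdisj : Disjoint (S₁ ×ˢ {(0 : G₂)}) ({(0 : G₁)} ×ˢ S₂) := by
    simp only [disjoint_left, mem_product, mem_singleton]
    rintro ⟨s, t⟩ ⟨hs, -⟩ ⟨rfl, -⟩
    exact h₁ hs
  rw [prodSteps, sum_union hdisj, sum_product, sum_product]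
  simp only [sum_singleton]

theorem walkCount_prodSteps (h₁ : (0 : G₁) ∉ S₁) (n : ℕ) (p₁ : G₁) (p₂ : G₂) :
    walkCount (prodSteps S₁ S₂) (R₁ ×ˢ R₂) (a₁, a₂) n (p₁, p₂) =
      ∑ m ∈ range (n + 1),
        n.choose m * (walkCount S₁ R₁ a₁ m p₁ * walkCount S₂ R₂ a₂ (n - m) p₂) := by
  induction n generalizing p₁ p₂ with
  | zero =>
    simp only [walkCount_zero, Set.mem_prod, Prod.ext_iff, zero_add, sum_range_one, tsub_zero,
      Nat.choose_self, one_mul]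
    split_ifs <;> simp_all
  | succ n ih =>
    by_cases hp₁ : p₁ ∈ R₁
    swap
    · simp [walkCount_of_notMem hp₁,
        walkCount_of_notMem (fun h : (p₁, p₂) ∈ R₁ ×ˢ R₂ => hp₁ h.1)]
    by_cases hp₂ : p₂ ∈ R₂
    swap
    · simp [walkCount_of_notMem hp₂,
        walkCount_of_notMem (fun h : (p₁, p₂) ∈ R₁ ×ˢ R₂ => hp₂ h.2)]
    have hpascal := sum_choose_succ_mul (R := ℕ)
      (fun i j => walkCount S₁ R₁ a₁ i p₁ * walkCount S₂ R₂ a₂ j p₂) n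
    simp only [Nat.cast_id] at hpascal
    rw [walkCount_succ (Set.mk_mem_prod hp₁ hp₂), sum_prodSteps h₁, hpascal, add_comm]
    simp only [Prod.mk_sub_mk, sub_zero, ih, sum_comm (s := S₁), sum_comm (s := S₂),
      ← mul_sum, ← sum_mul, ← walkCount_succ hp₁, ← walkCount_succ hp₂]
    congr 1
    refine sum_congr rfl fun m hm => ?_
    rw [Nat.sub_add_comm (mem_range_succ_iff.1 hm)]

open scoped Pointwise in
theorem card_walks_prodSteps (h₁ : (0 : G₁) ∉ S₁) (n : ℕ) :
    Nat.card (walks (prodSteps S₁ S₂) (R₁ ×ˢ R₂) (a₁, a₂) n) =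
      ∑ m ∈ range (n + 1),
        n.choose m * (Nat.card (walks S₁ R₁ a₁ m) * Nat.card (walks S₂ R₂ a₂ (n - m))) := by
  set T₁ := (range (n + 1)).biUnion fun m => {a₁} + m • S₁
  set T₂ := (range (n + 1)).biUnion fun m => {a₂} + m • S₂
  have hT₁ {m : ℕ} (hm : m ≤ n) {p : G₁} (hp : p ∉ T₁) : walkCount S₁ R₁ a₁ m p = 0 :=
    walkCount_eq_zero_of_notMem_add_nsmul fun h =>
      hp (mem_biUnion.2 ⟨m, mem_range_succ_iff.2 hm, h⟩)
  have hT₂ {m : ℕ} (hm : m ≤ n) {p : G₂} (hp : p ∉ T₂) : walkCount S₂ R₂ a₂ m p = 0 :=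
    walkCount_eq_zero_of_notMem_add_nsmul fun h =>
      hp (mem_biUnion.2 ⟨m, mem_range_succ_iff.2 hm, h⟩)
  rw [card_walks_eq_sum_walkCount (T₁ ×ˢ T₂)]
  · have hsplit (m : ℕ) (hm : m ∈ range (n + 1)) :
        n.choose m * (Nat.card (walks S₁ R₁ a₁ m) * Nat.card (walks S₂ R₂ a₂ (n - m))) =
          ∑ p₁ ∈ T₁, ∑ p₂ ∈ T₂,
            n.choose m * (walkCount S₁ R₁ a₁ m p₁ * walkCount S₂ R₂ a₂ (n - m) p₂) := by
      have hm := mem_range_succ_iff.1 hm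
      rw [card_walks_eq_sum_walkCount T₁ fun p => hT₁ hm,
        card_walks_eq_sum_walkCount T₂ fun p => hT₂ (Nat.sub_le n m), sum_mul_sum]
      simp only [mul_sum]
    rw [sum_congr rfl hsplit, sum_comm, sum_product]
    refine sum_congr rfl fun p₁ _ => ?_
    rw [sum_comm]
    exact sum_congr rfl fun p₂ _ => walkCount_prodSteps h₁ n p₁ p₂
  · rintro ⟨p₁, p₂⟩ hp
    rw [walkCount_prodSteps h₁]
    refine sum_eq_zero fun m hm => ?_
    have hm := mem_range_succ_iff.1 hm
    rcases not_and_or.1 (mem_product.not.1 hp) with hp | hp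
    · rw [hT₁ hm hp, zero_mul, mul_zero]
    · rw [hT₂ (Nat.sub_le n m) hp, mul_zero, mul_zero]

end Product

section Line

local notation "N" => walkCount ({1, -1} : Finset ℤ) (Set.Ici 0) 0

theorem walkCount_pmOne_succ {m : ℕ} {z : ℤ} (hz : 0 ≤ z) :
    N (m + 1) z = N m (z - 1) + N m (z + 1) := by
  rw [walkCount_succ (Set.mem_Ici.2 hz), sum_pair (by decide), sub_neg_eq_add]

/-- The ballot numbers: a walk of length `m` with `j` up-steps ends at `2 * j - m`. -/
theorem walkCount_pmOne_two_mul_sub (m j : ℕ) (h : m ≤ 2 * j) :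
    (N m (2 * j - m) : ℤ) = m.choose j - m.choose (j + 1) := by
  induction m generalizing j with
  | zero =>
    rcases j with _ | j
    · simp [walkCount_zero]
    · simp [walkCount_zero]
      omega
  | succ m ih =>
    obtain ⟨k, rfl⟩ : ∃ k, j = k + 1 := ⟨j - 1, by omega⟩
    have hprev : (N m (2 * k - m) : ℤ) = m.choose k - m.choose (k + 1) := by
      by_cases hk : m ≤ 2 * k
      · exact ih k hk
      · obtain rfl : m = 2 * k + 1 := by omega
        rw [walkCount_of_notMem (by simp), Nat.choose_symm_half]
        simp
    rw [walkCount_pmOne_succ (by omega), Nat.cast_add,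
      show (2 * (k + 1 : ℕ) - (m + 1 : ℕ) : ℤ) - 1 = 2 * k - m by push_cast; ring,
      show (2 * (k + 1 : ℕ) - (m + 1 : ℕ) : ℤ) + 1 = 2 * (k + 1 : ℕ) - m by push_cast; ring,
      hprev, ih (k + 1) (by omega), Nat.choose_succ_succ', Nat.choose_succ_succ' m (k + 1)]
    push_cast
    ring

theorem walkCount_pmOne_eq_zero {m : ℕ} {z : ℤ}
    (hz : z ∉ (range (m + 1)).image fun j : ℕ => 2 * (j : ℤ) - m) : N m z = 0 := by
  refine walkCount_eq_zero_of_notMem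
    (fun m => ↑((range (m + 1)).image fun j : ℕ => 2 * (j : ℤ) - m))
    (by simp) (fun m q hq s hs => ?_) hz
  simp only [coe_image, coe_range, Set.mem_image, Set.mem_Iio] at hq ⊢
  obtain ⟨j, hj, rfl⟩ := hq
  simp only [mem_insert, mem_singleton] at hs
  rcases hs with rfl | rfl
  · exact ⟨j + 1, by omega, by push_cast; ring⟩
  · exact ⟨j, by omega, by push_cast; ring⟩

theorem card_walks_pmOne (m : ℕ) :
    Nat.card (walks {1, -1} (Set.Ici 0) (0 : ℤ) m) = m.choose (m / 2) := by
  rw [card_walks_eq_sum_walkCount _ fun z => walkCount_pmOne_eq_zero,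
    sum_image fun i _ j _ h => by simpa using h,
    ← sum_range_add_sum_Ico _ (show (m + 1) / 2 ≤ m + 1 by omega),
    sum_eq_zero fun j hj => walkCount_of_notMem (by simp at hj ⊢; omega), zero_add,
    ← Nat.cast_inj (R := ℤ), Nat.cast_sum]
  calc ∑ j ∈ Ico ((m + 1) / 2) (m + 1), (N m (2 * j - m) : ℤ)
      = ∑ j ∈ Ico ((m + 1) / 2) (m + 1), ((m.choose j : ℤ) - m.choose (j + 1)) :=
        sum_congr rfl fun j hj => walkCount_pmOne_two_mul_sub m j (by simp at hj; omega)
    _ = m.choose ((m + 1) / 2) - m.choose (m + 1) := by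
        have := sum_Ico_sub (fun j => -(m.choose j : ℤ)) (show (m + 1) / 2 ≤ m + 1 by omega)
        simpa only [neg_sub_neg] using this
    _ = m.choose (m / 2) := by
        rw [Nat.choose_succ_self, Nat.choose_symm_of_eq_add (show m = (m + 1) / 2 + m / 2 by omega)]
        simp

end Line

end LatticeWalk

namespace Nat

theorem choose_mul_choose_mul_choose_mul_factorial (a b c d : ℕ) :
    (a + b + c + d).choose (a + b) * ((a + b).choose a * (c + d).choose c) *
      (a ! * b ! * c ! * d !) = (a + b + c + d)! := by
  have hab := add_choose_mul_factorial_mul_factorial a b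
  have hcd := add_choose_mul_factorial_mul_factorial c d
  have hn := add_choose_mul_factorial_mul_factorial (a + b) (c + d)
  rw [← choose_symm_add] at hab hcd
  rw [← choose_symm_add, ← add_assoc] at hn
  rw [← hn, ← hab, ← hcd]
  ring

theorem choose_mul_choose_mul_choose_comm (a b c d : ℕ) :
    (a + b + c + d).choose (a + b) * ((a + b).choose a * (c + d).choose c) =
      (a + b + c + d).choose (a + c) * ((a + c).choose a * (b + d).choose b) := by
  refine eq_of_mul_eq_mul_right (by positivity : 0 < a ! * b ! * c ! * d !) ?_
  have h := choose_mul_choose_mul_choose_mul_factorial a c b d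
  rw [add_right_comm a c b] at h
  rw [choose_mul_choose_mul_choose_mul_factorial, ← h]
  ring

theorem choose_mul_choose_half_mul_choose_half {n i : ℕ} (hi : i ≤ n) :
    n.choose i * (i.choose (i / 2) * (n - i).choose ((n - i) / 2)) =
      n.choose (n / 2) * ((n / 2).choose (i / 2) * ((n + 1) / 2).choose ((i + 1) / 2)) := by
  -- For `n` even and `i` odd the halves of `n - i` have to be paired the other way round.
  obtain ⟨c, hc, hcn, hic⟩ : ∃ c, (n - i).choose ((n - i) / 2) = (n - i).choose c ∧
      c ≤ n - i ∧ i / 2 + c = n / 2 := by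
    by_cases h : n % 2 = 0 ∧ i % 2 = 1
    · exact ⟨n - i - (n - i) / 2, choose_symm_of_eq_add (by omega), by omega, by omega⟩
    · exact ⟨(n - i) / 2, rfl, div_le_self _ _, by omega⟩
  have h := choose_mul_choose_mul_choose_comm (i / 2) (i - i / 2) c (n - i - c)
  rw [show i / 2 + (i - i / 2) + c + (n - i - c) = n by omega,
    show i / 2 + (i - i / 2) = i by omega, show c + (n - i - c) = n - i by omega, hic,
    show i - i / 2 + (n - i - c) = (n + 1) / 2 by omega,
    show i - i / 2 = (i + 1) / 2 by omega] at h
  rw [hc, h]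

theorem sum_range_choose_mul_choose_succ (K M : ℕ) :
    ∑ a ∈ range (K + 1), K.choose a * M.choose (a + 1) = (K + M).choose (K + 1) := by
  rw [add_choose_eq, Finset.Nat.sum_antidiagonal_eq_sum_range_succ
      (fun i j => K.choose i * M.choose j),
    sum_range_succ (fun k => K.choose k * M.choose (K + 1 - k)) (K + 1), choose_succ_self,
    zero_mul, add_zero, ← sum_range_reflect (fun i => K.choose i * M.choose (K + 1 - i))]
  refine sum_congr rfl fun a ha => ?_
  have ha := mem_range_succ_iff.1 ha
  rw [choose_symm_of_eq_add (show K = (K + 1 - 1 - a) + a by omega),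
    show K + 1 - (K + 1 - 1 - a) = a + 1 by omega]

theorem sum_range_two_mul {M : Type*} [AddCommMonoid M] (f : ℕ → M) (T : ℕ) :
    ∑ i ∈ range (2 * T), f i = ∑ a ∈ range T, (f (2 * a) + f (2 * a + 1)) := by
  induction T with
  | zero => simp
  | succ T ih =>
    rw [mul_add_one, sum_range_succ, sum_range_succ, sum_range_succ, ih, add_assoc]

theorem sum_choose_mul_choose_half_mul_choose_half (n : ℕ) :
    ∑ i ∈ range (n + 1), n.choose i * (i.choose (i / 2) * (n - i).choose ((n - i) / 2)) =
      n.choose (n / 2) * (n + 1).choose ((n + 1) / 2) := by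
  set K := n / 2
  set L := (n + 1) / 2
  calc ∑ i ∈ range (n + 1), n.choose i * (i.choose (i / 2) * (n - i).choose ((n - i) / 2))
      = n.choose K * ∑ i ∈ range (n + 1), K.choose (i / 2) * L.choose ((i + 1) / 2) := by
        rw [mul_sum]
        exact sum_congr rfl fun i hi =>
          choose_mul_choose_half_mul_choose_half (mem_range_succ_iff.1 hi)
    _ = n.choose K * ∑ i ∈ range (2 * (K + 1)), K.choose (i / 2) * L.choose ((i + 1) / 2) := by
        congr 1
        refine sum_subset (range_subset_range.2 (by omega)) fun i hi hi' => ?_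
        simp only [mem_range] at hi hi'
        rw [choose_eq_zero_of_lt (show L < (i + 1) / 2 by omega), mul_zero]
    _ = n.choose K * ∑ a ∈ range (K + 1), K.choose a * (L + 1).choose (a + 1) := by
        rw [sum_range_two_mul]
        refine congrArg _ (sum_congr rfl fun a _ => ?_)
        rw [show 2 * a / 2 = a by omega, show (2 * a + 1) / 2 = a by omega,
          show (2 * a + 1 + 1) / 2 = a + 1 by omega, ← mul_add, choose_succ_succ' L a]
    _ = n.choose K * (n + 1).choose L := by
        rw [sum_range_choose_mul_choose_succ,
          choose_symm_of_eq_add (show K + (L + 1) = (K + 1) + L by omega),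
          show K + (L + 1) = n + 1 by omega]

end Nat

/-- The number of `n`-step quadrant walks on the square lattice starting at the origin is
`C(n, ⌊n/2⌋) C(n+1, ⌈n/2⌉) = ∑_m C(n, m) C(m, ⌊m/2⌋) C(n−m, ⌊(n−m)/2⌋)`. -/
theorem squareQuadrantCount_eq (n : ℕ) :
    squareQuadrantCount n = Nat.choose n (n / 2) * Nat.choose (n + 1) ((n + 1) / 2) ∧
    squareQuadrantCount n = ∑ m ∈ Finset.range (n + 1),
      Nat.choose n m * Nat.choose m (m / 2) * Nat.choose (n - m) ((n - m) / 2) := by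
  have hsteps : ({(1, 0), (-1, 0), (0, 1), (0, -1)} : Finset (ℤ × ℤ)) =
      LatticeWalk.prodSteps {1, -1} {1, -1} := by decide
  have hcount : squareQuadrantCount n = ∑ m ∈ range (n + 1),
      n.choose m * (m.choose (m / 2) * (n - m).choose ((n - m) / 2)) := by
    calc squareQuadrantCount n
        = Nat.card (LatticeWalk.walks (LatticeWalk.prodSteps {1, -1} {1, -1})
            (Set.Ici 0 ×ˢ Set.Ici 0) ((0 : ℤ), (0 : ℤ)) n) :=
          Nat.card_congr <| Equiv.subtypeEquivRight fun w => by
            rw [← hsteps]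
            simp only [LatticeWalk.walks, Set.mem_ofPred_eq, Set.mem_prod, Set.mem_Ici,
              mem_insert, mem_singleton, Set.mem_insert_iff, Set.mem_singleton_iff]
      _ = _ := by
          rw [LatticeWalk.card_walks_prodSteps (by decide)]
          simp only [LatticeWalk.card_walks_pmOne]
  exact ⟨hcount.trans (Nat.sum_choose_mul_choose_half_mul_choose_half n),
    hcount.trans (sum_congr rfl fun m _ => (mul_assoc _ _ _).symm)⟩
end

section
/- Let ξ(x) = x² ∑_{m≥0} C(3m,m)/(2m+1) · x^{3m} and ψ(x) = 1 − ∑_{m≥1} m!(6m)! / ((6m−1)·((2m)!)²·(3m)!) · x^{3m}/16^m, as power series over ℚ. Both ξ and ψ have radius of convergence exactly x_c = 4^{1/3}/3. -/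
/-!
Each series is supported on a single residue class modulo 3, and the ratio of consecutive
nonzero coefficients is a rational function of `m` tending to `27/4`. The ratio test in the
variable `x³` therefore gives the radius `(4/27)^{1/3} = x_c`.
-/

open Filter Topology Nat

/-- The coefficient of `xⁿ` in `ξ(x) = x² ∑_{m ≥ 0} C(3m, m)/(2m+1) x^{3m}`, as a real
number. -/
noncomputable def xiCoeffR (n : ℕ) : ℝ :=
  if n % 3 = 2 then (Nat.choose (3 * (n / 3)) (n / 3) : ℝ) / (2 * (n / 3) + 1) else 0

/-- The coefficient of `xⁿ` in
`ψ(x) = 1 − ∑_{m ≥ 1} m!(6m)!/((6m−1)((2m)!)²(3m)!) · x^{3m}/16^m`, as a real number. -/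
noncomputable def psiCoeffR (n : ℕ) : ℝ :=
  if n = 0 then 1
  else if n % 3 = 0 then
    -(((n / 3).factorial : ℝ) * ((6 * (n / 3)).factorial : ℝ) /
      ((6 * ((n / 3) : ℝ) - 1) * (((2 * (n / 3)).factorial : ℝ)) ^ 2 *
        ((3 * (n / 3)).factorial : ℝ) * 16 ^ (n / 3)))
  else 0

noncomputable def xc : ℝ := (4 : ℝ) ^ ((1 : ℝ) / 3) / 3

theorem summable_iff_of_eq_zero_of_mod_ne {α : Type*} [AddCommMonoid α] [TopologicalSpace α]
    {f : ℕ → α} {k r : ℕ} (hr : r < k) (hf : ∀ n, n % k ≠ r → f n = 0) :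
    Summable f ↔ Summable fun m ↦ f (k * m + r) := by
  refine (Function.Injective.summable_iff (g := fun m ↦ k * m + r) ?_ fun n hn ↦ hf n ?_).symm
  · intro a b hab
    simpa [(by omega : 0 < k).ne'] using hab
  · rintro rfl
    exact hn ⟨n / k, Nat.div_add_mod n k⟩

section RatioTest
variable {𝕜 : Type*} [NormedField 𝕜] {L : ℝ}

theorem summable_mul_pow_of_tendsto_ratio [CompleteSpace 𝕜] {c : ℕ → 𝕜}
    (hc : ∀ᶠ m in atTop, c m ≠ 0) (hL : Tendsto (fun m ↦ ‖c (m + 1)‖ / ‖c m‖) atTop (𝓝 L))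
    {y : 𝕜} (hy : L * ‖y‖ < 1) : Summable fun m ↦ c m * y ^ m := by
  rcases eq_or_ne y 0 with rfl | hy0
  · exact summable_of_ne_finset_zero (s := {0}) fun m hm ↦ by simp_all
  refine summable_of_ratio_test_tendsto_lt_one hy
    (by filter_upwards [hc] with m hm; simp [hm, hy0]) ((hL.mul_const ‖y‖).congr' ?_)
  filter_upwards [hc] with m hm
  simp only [norm_mul, norm_pow, pow_succ]
  field_simp

theorem not_summable_mul_pow_of_tendsto_ratio {c : ℕ → 𝕜}
    (hL : Tendsto (fun m ↦ ‖c (m + 1)‖ / ‖c m‖) atTop (𝓝 L)) {y : 𝕜} (hy : 1 < L * ‖y‖) :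
    ¬ Summable fun m ↦ c m * y ^ m := by
  have hy0 : y ≠ 0 := by rintro rfl; simp at hy; linarith
  refine not_summable_of_ratio_test_tendsto_gt_one hy ((hL.mul_const ‖y‖).congr fun m ↦ ?_)
  simp only [norm_mul, norm_pow, pow_succ]
  field_simp

variable {f : ℕ → 𝕜} {k r : ℕ}

theorem summable_mul_pow_of_tendsto_ratio_of_mod_ne [CompleteSpace 𝕜] (hr : r < k)
    (hf : ∀ n, n % k ≠ r → f n = 0) (hne : ∀ᶠ m in atTop, f (k * m + r) ≠ 0)
    (hL : Tendsto (fun m ↦ ‖f (k * (m + 1) + r)‖ / ‖f (k * m + r)‖) atTop (𝓝 L))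
    {x : 𝕜} (hx : L * ‖x‖ ^ k < 1) : Summable fun n ↦ f n * x ^ n := by
  rw [summable_iff_of_eq_zero_of_mod_ne hr fun n hn ↦ by simp [hf n hn]]
  have := summable_mul_pow_of_tendsto_ratio hne hL (y := x ^ k) (by rwa [norm_pow])
  refine (this.mul_left (x ^ r)).congr fun m ↦ ?_
  ring

theorem not_summable_mul_pow_of_tendsto_ratio_of_mod_ne (hr : r < k)
    (hf : ∀ n, n % k ≠ r → f n = 0)
    (hL : Tendsto (fun m ↦ ‖f (k * (m + 1) + r)‖ / ‖f (k * m + r)‖) atTop (𝓝 L))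
    {x : 𝕜} (hx : 1 < L * ‖x‖ ^ k) : ¬ Summable fun n ↦ f n * x ^ n := by
  have hx0 : x ≠ 0 := by rintro rfl; simp [zero_pow (by omega : k ≠ 0)] at hx; linarith
  rw [summable_iff_of_eq_zero_of_mod_ne hr fun n hn ↦ by simp [hf n hn],
    ← summable_mul_left_iff (inv_ne_zero (pow_ne_zero r hx0))]
  have := not_summable_mul_pow_of_tendsto_ratio (c := fun m ↦ f (k * m + r)) hL (y := x ^ k)
    (by rwa [norm_pow])
  refine fun h ↦ this (h.congr fun m ↦ ?_)
  field_simp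
  ring

end RatioTest

theorem tendsto_comp_inv_natCast {u : ℕ → ℝ} {F : ℝ → ℝ} (hF : ContinuousAt F 0)
    (hu : ∀ᶠ m : ℕ in atTop, u m = F (m : ℝ)⁻¹) : Tendsto u atTop (𝓝 (F 0)) :=
  (hF.tendsto.comp tendsto_inv_atTop_nhds_zero_nat).congr' (hu.mono fun _ h ↦ h.symm)

theorem xc_pos : 0 < xc := by
  unfold xc
  positivity

theorem xc_pow_three : xc ^ 3 = 4 / 27 := by
  rw [xc, div_pow, ← Real.rpow_natCast, ← Real.rpow_mul (by norm_num)]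
  norm_num

theorem lt_xc_iff {t : ℝ} (ht : 0 ≤ t) : t < xc ↔ 27 / 4 * t ^ 3 < 1 := by
  rw [← pow_lt_pow_iff_left₀ ht xc_pos.le three_ne_zero, xc_pow_three]
  constructor <;> intro h <;> linarith

theorem xc_lt_iff {t : ℝ} (ht : 0 ≤ t) : xc < t ↔ 1 < 27 / 4 * t ^ 3 := by
  rw [← pow_lt_pow_iff_left₀ xc_pos.le ht three_ne_zero, xc_pow_three]
  constructor <;> intro h <;> linarith

theorem Nat.choose_three_mul_succ (m : ℕ) :
    (3 * (m + 1)).choose (m + 1) * ((m + 1) * (2 * m + 1) * (2 * m + 2)) =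
      (3 * m).choose m * ((3 * m + 1) * (3 * m + 2) * (3 * m + 3)) := by
  have h1 := Nat.add_one_mul_choose_eq (3 * m) m
  have h2 := Nat.choose_mul_succ_eq (3 * m + 1) (m + 1)
  have h3 := Nat.choose_mul_succ_eq (3 * m + 2) (m + 1)
  rw [show 3 * m + 1 + 1 - (m + 1) = 2 * m + 1 by omega] at h2
  rw [show 3 * m + 2 + 1 - (m + 1) = 2 * m + 2 by omega] at h3
  calc (3 * (m + 1)).choose (m + 1) * ((m + 1) * (2 * m + 1) * (2 * m + 2))
      = (3 * m + 2 + 1).choose (m + 1) * (2 * m + 2) * ((m + 1) * (2 * m + 1)) := by ring_nf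
    _ = (3 * m + 1 + 1).choose (m + 1) * (2 * m + 1) * ((m + 1) * (3 * m + 3)) := by
        rw [← h3]; ring
    _ = (3 * m + 1).choose (m + 1) * (m + 1) * ((3 * m + 2) * (3 * m + 3)) := by
        rw [← h2]; ring
    _ = (3 * m).choose m * ((3 * m + 1) * (3 * m + 2) * (3 * m + 3)) := by
        rw [← h1]; ring

-- `n / 3` in the denominator of `xiCoeffR` is real division, hence `6 * m + 7`.
theorem xiCoeffR_three_mul_add_two (m : ℕ) :
    xiCoeffR (3 * m + 2) = 3 * (3 * m).choose m / (6 * m + 7) := by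
  rw [xiCoeffR, if_pos (by omega), show (3 * m + 2) / 3 = m by omega]
  push_cast
  field_simp
  ring

theorem xiCoeffR_three_mul_add_two_pos (m : ℕ) : 0 < xiCoeffR (3 * m + 2) := by
  have : 0 < (3 * m).choose m := Nat.choose_pos (by omega)
  rw [xiCoeffR_three_mul_add_two]
  positivity

theorem tendsto_xiCoeffR_ratio :
    Tendsto (fun m ↦ ‖xiCoeffR (3 * (m + 1) + 2)‖ / ‖xiCoeffR (3 * m + 2)‖) atTop
      (𝓝 (27 / 4)) := by
  let F : ℝ → ℝ := fun t ↦ (3 + t) * (3 + 2 * t) * (3 + 3 * t) * (6 + 7 * t) /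
    ((1 + t) * (2 + t) * (2 + 2 * t) * (6 + 13 * t))
  have hF : ContinuousAt F 0 := by fun_prop (disch := norm_num)
  convert tendsto_comp_inv_natCast hF ?_ using 2
  · norm_num [F]
  filter_upwards [eventually_ne_atTop 0] with m hm
  have hC : ((3 * (m + 1)).choose (m + 1) : ℝ) =
      (3 * m).choose m * ((3 * m + 1) * (3 * m + 2) * (3 * m + 3)) /
        ((m + 1) * (2 * m + 1) * (2 * m + 2)) := by
    rw [eq_div_iff (by positivity)]
    exact_mod_cast Nat.choose_three_mul_succ m
  have hC0 : (0 : ℝ) < (3 * m).choose m := by exact_mod_cast Nat.choose_pos (by omega)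
  rw [Real.norm_of_nonneg (xiCoeffR_three_mul_add_two_pos _).le,
    Real.norm_of_nonneg (xiCoeffR_three_mul_add_two_pos _).le, xiCoeffR_three_mul_add_two,
    xiCoeffR_three_mul_add_two, hC]
  push_cast [F]
  field_simp
  ring

-- With `psiNegCoeff 0 = -1`, `ψ(x) = -∑_{m ≥ 0} psiNegCoeff m * x ^ (3 * m)`.
noncomputable def psiNegCoeff (m : ℕ) : ℝ :=
  m ! * (6 * m)! / ((6 * m - 1) * (2 * m)! ^ 2 * (3 * m)! * 16 ^ m)

theorem psiCoeffR_three_mul (m : ℕ) : psiCoeffR (3 * m) = -psiNegCoeff m := by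
  rcases eq_or_ne m 0 with rfl | hm
  · norm_num [psiCoeffR, psiNegCoeff]
  · simp [psiCoeffR, psiNegCoeff, hm]

theorem psiNegCoeff_pos {m : ℕ} (hm : m ≠ 0) : 0 < psiNegCoeff m := by
  have : (1 : ℝ) ≤ m := by exact_mod_cast Nat.one_le_iff_ne_zero.mpr hm
  have : (0 : ℝ) < 6 * m - 1 := by linarith
  unfold psiNegCoeff
  positivity

theorem psiNegCoeff_succ {m : ℕ} (hm : m ≠ 0) :
    psiNegCoeff (m + 1) = psiNegCoeff m * ((m + 1) * (6 * m + 1) * (6 * m + 2) * (6 * m + 3) *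
        (6 * m + 4) * (6 * m + 6) * (6 * m - 1)) /
      (16 * (2 * m + 1) ^ 2 * (2 * m + 2) ^ 2 * (3 * m + 1) * (3 * m + 2) * (3 * m + 3)) := by
  have : (1 : ℝ) ≤ m := by exact_mod_cast Nat.one_le_iff_ne_zero.mpr hm
  -- oriented as in `field_simp`'s normal form, where it looks for this hypothesis
  have : (m : ℝ) * 6 - 1 ≠ 0 := by linarith
  simp only [psiNegCoeff, show 6 * (m + 1) = 6 * m + 6 by ring,
    show 2 * (m + 1) = 2 * m + 2 by ring, show 3 * (m + 1) = 3 * m + 3 by ring]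
  push_cast [Nat.factorial_succ]
  rw [show 6 * ((m : ℝ) + 1) - 1 = 6 * m + 5 by ring]
  field_simp
  ring

theorem tendsto_psiCoeffR_ratio :
    Tendsto (fun m ↦ ‖psiCoeffR (3 * (m + 1))‖ / ‖psiCoeffR (3 * m)‖) atTop
      (𝓝 (27 / 4)) := by
  let F : ℝ → ℝ := fun t ↦
    (1 + t) * (6 + t) * (6 + 2 * t) * (6 + 3 * t) * (6 + 4 * t) * (6 + 6 * t) * (6 - t) /
      (16 * (2 + t) ^ 2 * (2 + 2 * t) ^ 2 * (3 + t) * (3 + 2 * t) * (3 + 3 * t))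
  have hF : ContinuousAt F 0 := by fun_prop (disch := norm_num)
  convert tendsto_comp_inv_natCast hF ?_ using 2
  · norm_num [F]
  filter_upwards [eventually_ne_atTop 0] with m hm
  have hpos := psiNegCoeff_pos hm
  rw [psiCoeffR_three_mul, psiCoeffR_three_mul, norm_neg, norm_neg,
    Real.norm_of_nonneg (psiNegCoeff_pos m.succ_ne_zero).le, Real.norm_of_nonneg hpos.le,
    psiNegCoeff_succ hm]
  simp only [F]
  field_simp

/-- Both `ξ` and `ψ` have radius of convergence exactly `x_c = 4^{1/3}/3`: the series
converge for `|x| < x_c` and diverge for `|x| > x_c`. -/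
theorem xi_psi_radius :
    (∀ x : ℝ, |x| < xc → Summable fun n => xiCoeffR n * x ^ n) ∧
    (∀ x : ℝ, xc < |x| → ¬ Summable fun n => xiCoeffR n * x ^ n) ∧
    (∀ x : ℝ, |x| < xc → Summable fun n => psiCoeffR n * x ^ n) ∧
    (∀ x : ℝ, xc < |x| → ¬ Summable fun n => psiCoeffR n * x ^ n) := by
  have hxi_zero (n : ℕ) (hn : n % 3 ≠ 2) : xiCoeffR n = 0 := by simp [xiCoeffR, hn]
  have hpsi_zero (n : ℕ) (hn : n % 3 ≠ 0) : psiCoeffR n = 0 := by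
    simp [psiCoeffR, hn, show n ≠ 0 by omega]
  have hxi_ne : ∀ᶠ m in atTop, xiCoeffR (3 * m + 2) ≠ 0 :=
    .of_forall fun m ↦ (xiCoeffR_three_mul_add_two_pos m).ne'
  have hpsi_ne : ∀ᶠ m in atTop, psiCoeffR (3 * m) ≠ 0 := by
    filter_upwards [eventually_ne_atTop 0] with m hm
    simpa [psiCoeffR_three_mul] using (psiNegCoeff_pos hm).ne'
  refine ⟨fun x hx ↦ ?_, fun x hx ↦ ?_, fun x hx ↦ ?_, fun x hx ↦ ?_⟩
  · exact summable_mul_pow_of_tendsto_ratio_of_mod_ne (by norm_num) hxi_zero hxi_ne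
      tendsto_xiCoeffR_ratio ((lt_xc_iff (abs_nonneg x)).mp hx)
  · exact not_summable_mul_pow_of_tendsto_ratio_of_mod_ne (by norm_num) hxi_zero
      tendsto_xiCoeffR_ratio ((xc_lt_iff (abs_nonneg x)).mp hx)
  · exact summable_mul_pow_of_tendsto_ratio_of_mod_ne (by norm_num) hpsi_zero hpsi_ne
      tendsto_psiCoeffR_ratio ((lt_xc_iff (abs_nonneg x)).mp hx)
  · exact not_summable_mul_pow_of_tendsto_ratio_of_mod_ne (by norm_num) hpsi_zero
      tendsto_psiCoeffR_ratio ((xc_lt_iff (abs_nonneg x)).mp hx)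
end

section
/- For every nonzero complex number x, at least one complex root y of the cubic equation y³ − x·y + x³ = 0 satisfies |y| > |x|. -/
/-!
Let `y₁, y₂, y₃` be the roots, so `∑ yᵢ = 0`, `∑ yᵢyⱼ = -x` and `y₁y₂y₃ = -x³`. If every root
had modulus at most `‖x‖`, the product would force all three moduli to equal `‖x‖`. But three
complex numbers of equal modulus `r` summing to zero satisfy `conj yᵢ = r² / yᵢ`, so
`∑ 1 / yᵢ = 0`, i.e. `∑ yᵢyⱼ = 0`, contradicting `x ≠ 0`.
-/

open Polynomial

theorem IsAlgClosed.exists_depressed_cubic_vieta {K : Type*} [Field K] [IsAlgClosed K]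
    (a b : K) :
    ∃ y₁ y₂ y₃ : K, y₁ + y₂ + y₃ = 0 ∧ y₁ * y₂ + y₁ * y₃ + y₂ * y₃ = a ∧ y₁ * y₂ * y₃ = -b := by
  obtain ⟨y₁, h₁⟩ := IsAlgClosed.exists_root (X ^ 3 + C a * X + C b : K[X])
    (by rw [show (X ^ 3 + C a * X + C b : K[X]).degree = 3 by compute_degree!]; decide)
  -- `X² + y₁ X + (y₁² + a)` is the cofactor of `X - y₁`
  obtain ⟨y₂, h₂⟩ := IsAlgClosed.exists_root (X ^ 2 + C y₁ * X + C (y₁ ^ 2 + a) : K[X])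
    (by rw [show (X ^ 2 + C y₁ * X + C (y₁ ^ 2 + a) : K[X]).degree = 2 by compute_degree!]
        decide)
  simp only [IsRoot, eval_add, eval_pow, eval_mul, eval_C, eval_X] at h₁ h₂
  exact ⟨y₁, y₂, -y₁ - y₂, by ring, by linear_combination -h₂, by linear_combination h₁ - y₁ * h₂⟩

theorem depressed_cubic_eq_mul_of_vieta {R : Type*} [CommRing R] {a b y₁ y₂ y₃ : R}
    (hs : y₁ + y₂ + y₃ = 0) (he : y₁ * y₂ + y₁ * y₃ + y₂ * y₃ = a) (hp : y₁ * y₂ * y₃ = -b)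
    (y : R) : y ^ 3 + a * y + b = (y - y₁) * (y - y₂) * (y - y₃) := by
  linear_combination y ^ 2 * hs - y * he + hp

theorem eq_of_le_of_mul_eq_pow_three {a b c r : ℝ} (ha : 0 ≤ a) (hb : 0 ≤ b) (hc : 0 ≤ c)
    (har : a ≤ r) (hbr : b ≤ r) (hcr : c ≤ r) (h : a * b * c = r ^ 3) :
    a = r ∧ b = r ∧ c = r := by
  have ge : ∀ {a b c : ℝ}, 0 ≤ a → 0 ≤ b → 0 ≤ c → b ≤ r → c ≤ r → a * b * c = r ^ 3 →
      r ≤ a := fun {a b c} ha hb hc hbr hcr h => by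
    by_contra! har
    have hr : 0 < r := ha.trans_lt har
    have hbc : b * c ≤ r * r := mul_le_mul hbr hcr hc hr.le
    nlinarith [mul_le_mul_of_nonneg_left hbc ha, mul_lt_mul_of_pos_right har (mul_pos hr hr)]
  exact ⟨har.antisymm (ge ha hb hc hbr hcr h),
    hbr.antisymm (ge hb ha hc har hcr (by linear_combination h)),
    hcr.antisymm (ge hc ha hb har hbr (by linear_combination h))⟩

theorem Complex.sum_mul_pairs_eq_zero_of_norm_eq {y₁ y₂ y₃ : ℂ} (hs : y₁ + y₂ + y₃ = 0)
    (h₂ : ‖y₂‖ = ‖y₁‖) (h₃ : ‖y₃‖ = ‖y₁‖) : y₁ * y₂ + y₁ * y₃ + y₂ * y₃ = 0 := by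
  have hconj : ∀ y : ℂ, ‖y‖ = ‖y₁‖ → starRingEnd ℂ y * y = (‖y₁‖ : ℂ) ^ 2 := fun y hy => by
    rw [Complex.conj_mul', hy]
  have hs' : starRingEnd ℂ y₁ + starRingEnd ℂ y₂ + starRingEnd ℂ y₃ = 0 := by
    rw [← map_add, ← map_add, hs, map_zero]
  -- `conj yᵢ = r² / yᵢ`, so `r² (y₁y₂ + y₁y₃ + y₂y₃) = y₁y₂y₃ (conj y₁ + conj y₂ + conj y₃)`
  have key : (‖y₁‖ : ℂ) ^ 2 * (y₁ * y₂ + y₁ * y₃ + y₂ * y₃) = 0 := by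
    linear_combination y₁ * y₂ * y₃ * hs' - y₂ * y₃ * hconj y₁ rfl - y₁ * y₃ * hconj y₂ h₂
      - y₁ * y₂ * hconj y₃ h₃
  rcases mul_eq_zero.mp key with h | h
  · have : y₁ = 0 := by simpa using h
    simp_all
  · exact h

/-- For every nonzero complex `x`, at least one root `y` of the kernel equation
`y³ − xy + x³ = 0` satisfies `|y| > |x|`. -/
theorem kernel_root_large_modulus (x : ℂ) (hx : x ≠ 0) :
    ∃ y : ℂ, y ^ 3 - x * y + x ^ 3 = 0 ∧ ‖x‖ < ‖y‖ := by
  obtain ⟨y₁, y₂, y₃, hs, he, hp⟩ := IsAlgClosed.exists_depressed_cubic_vieta (-x) (x ^ 3)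
  have hfactor (y : ℂ) : y ^ 3 - x * y + x ^ 3 = (y - y₁) * (y - y₂) * (y - y₃) := by
    linear_combination depressed_cubic_eq_mul_of_vieta hs he hp y
  by_contra! hsmall
  have h₁ := hsmall y₁ (by rw [hfactor]; ring)
  have h₂ := hsmall y₂ (by rw [hfactor]; ring)
  have h₃ := hsmall y₃ (by rw [hfactor]; ring)
  have hnorm : ‖y₁‖ * ‖y₂‖ * ‖y₃‖ = ‖x‖ ^ 3 := by
    rw [← norm_mul, ← norm_mul, hp, norm_neg, norm_pow]
  obtain ⟨e₁, e₂, e₃⟩ := eq_of_le_of_mul_eq_pow_three (norm_nonneg _) (norm_nonneg _)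
    (norm_nonneg _) h₁ h₂ h₃ hnorm
  have hzero := Complex.sum_mul_pairs_eq_zero_of_norm_eq hs (e₂.trans e₁.symm) (e₃.trans e₁.symm)
  exact hx (by linear_combination he - hzero)
end
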